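/- For every nonnegative integer n, $B_{n,\lambda}^{(c)}(x,y)=\sum_{m=0}^{n}\sum_{k=0}^{m}\sum_{l=0}^{\lfloor k/2\rfloor}\binom{n}{m}\binom{k}{2l}(-1)^l\lambda^{n-k}S_1(m,k)\,b_{n-m}\,B_{k-2l}(x)\,y^{2l}$, expressing the type 2 degenerate cosine-Bernoulli polynomials in terms of the type 2 Bernoulli polynomials, Stirling numbers of the first kind, and Bernoulli numbers of the second kind. -/

import Mathlib

open PowerSeries Finset Complex

/-- The degenerate falling factorial `(x)_{n,λ} = x(x-λ)⋯(x-(n-1)λ)`. -/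
noncomputable def dff (l x : ℂ) (n : ℕ) : ℂ := ∏ j ∈ Finset.range n, (x - j * l)

/-- Exponential generating function of a sequence: `Σ f n * t^n / n!`. -/
noncomputable def egf (f : ℕ → ℂ) : PowerSeries ℂ := PowerSeries.mk fun n => f n / n.factorial

/-- The degenerate exponential `e_λ^x(t) = (1+λt)^{x/λ} = Σ (x)_{n,λ} t^n/n!` as a power series. -/
noncomputable def degExp (l x : ℂ) : PowerSeries ℂ := egf (dff l x)

/-- The degenerate cosine `cos_λ^{(y)}(t) = cos((y/λ) log(1+λt)) = (e_λ^{iy}(t)+e_λ^{-iy}(t))/2`. -/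
noncomputable def degCos (l y : ℂ) : PowerSeries ℂ :=
  PowerSeries.C (R := ℂ) (1/2) * (degExp l (Complex.I * y) + degExp l (-(Complex.I * y)))

/-- The degenerate sine `sin_λ^{(y)}(t) = sin((y/λ) log(1+λt)) = (e_λ^{iy}(t)-e_λ^{-iy}(t))/(2i)`. -/
noncomputable def degSin (l y : ℂ) : PowerSeries ℂ :=
  PowerSeries.C (R := ℂ) (1/(2*Complex.I)) * (degExp l (Complex.I * y) - degExp l (-(Complex.I * y)))

/-- The exponential series `e^{at} = Σ a^n t^n/n!`. -/
noncomputable def expS (a : ℂ) : PowerSeries ℂ := egf (fun n => a ^ n)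

/-- The series of `log(1+t)`. -/
noncomputable def logS : PowerSeries ℂ := PowerSeries.mk fun n => if n = 0 then 0 else (-1)^(n+1) / n


/-!
Put `L(t) = log(1 + λt)/λ` (so `L(t) = t` when `λ = 0`). Both `e_λ^a(t)` and `exp(a L(t))` solve
`(1 + λt) F' = a F` with `F(0) = 1`, so they agree; hence substituting `L` into power series maps
`e^{at}` to `e_λ^a(t)`, `cos(yt)` to the degenerate cosine, and the defining identity of `B_n(x)`
to `(Σ B_n(x) L^n/n!) (e_λ^{1/2} - e_λ^{-1/2}) = L e_λ^x`. Rescaling `t / log(1+t)` by `λ` gives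
`t = L(t) Σ λ^n b_n t^n/n!`. Together these identify the generating function of
`B_{n,λ}^{(c)}(x,y)` as `(Σ λ^n b_n t^n/n!) · Σ_k g_k L^k/k!`, where
`g_k = Σ_l C(k,2l) (-1)^l y^{2l} B_{k-2l}(x)` are the coefficients of `cos(yt) Σ B_n(x) t^n/n!`,
and the coefficient of `t^m/m!` in `L^k/k!` is `λ^{m-k} S_1(m,k)`.
-/

theorem PowerSeries.coeff_subst_eq_sum_range {R : Type*} [CommRing R] {a : R⟦X⟧}
    (ha : constantCoeff a = 0) (f : R⟦X⟧) (n : ℕ) :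
    coeff n (f.subst a) = ∑ k ∈ range (n + 1), coeff k f * coeff n (a ^ k) := by
  rw [coeff_subst' (HasSubst.of_constantCoeff_zero' ha)]
  refine finsum_eq_sum_of_support_subset _ fun k hk => ?_
  by_contra hkn
  refine hk ?_
  have hlt : (n : ℕ∞) < (a ^ k).order :=
    (Nat.cast_lt.mpr (by simpa using hkn)).trans_le (le_order_pow_of_constantCoeff_eq_zero k ha)
  simp [coeff_of_lt_order n hlt]

theorem PowerSeries.coeff_one_add_C_mul_X_mul_derivative {R : Type*} [CommRing R] (l : R)
    (F : R⟦X⟧) (n : ℕ) :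
    coeff n ((1 + C l * X) * d⁄dX R F) = (n + 1) * coeff (n + 1) F + l * n * coeff n F := by
  rcases n with _ | n
  · simpa using coeff_derivative F 0
  · rw [add_mul, one_mul, mul_assoc, map_add, coeff_C_mul, coeff_succ_X_mul, coeff_derivative,
      coeff_derivative]
    push_cast
    ring

theorem PowerSeries.eq_of_one_add_C_mul_X_mul_derivative_eq {K : Type*} [Field K] [CharZero K]
    {l a : K} {F G : K⟦X⟧} (hF : (1 + C l * X) * d⁄dX K F = C a * F)
    (hG : (1 + C l * X) * d⁄dX K G = C a * G) (h0 : constantCoeff F = constantCoeff G) :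
    F = G := by
  ext n
  induction n with
  | zero => simpa using h0
  | succ n ih =>
    have hF' := congrArg (coeff n) hF
    have hG' := congrArg (coeff n) hG
    rw [coeff_one_add_C_mul_X_mul_derivative, coeff_C_mul] at hF' hG'
    have hn : (n + 1 : K) ≠ 0 := by exact_mod_cast n.succ_ne_zero
    refine mul_left_cancel₀ hn ?_
    linear_combination hF' - hG' + (a - l * n) * ih

theorem coeff_egf (f : ℕ → ℂ) (n : ℕ) : coeff n (egf f) = f n / n.factorial := by
  simp [egf]

theorem egf_injective : Function.Injective egf := fun f g h => funext fun n => by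
  simpa [coeff_egf, Nat.factorial_ne_zero] using congrArg (coeff n) h

theorem egf_mul (f g : ℕ → ℂ) :
    egf f * egf g = egf fun n => ∑ k ∈ range (n + 1), (n.choose k : ℂ) * f k * g (n - k) := by
  ext n
  rw [coeff_mul,
    Nat.sum_antidiagonal_eq_sum_range_succ (fun i j => coeff i (egf f) * coeff j (egf g)),
    coeff_egf, sum_div]
  refine sum_congr rfl fun k hk => ?_
  have hn : (n.factorial : ℂ) ≠ 0 := Nat.cast_ne_zero.mpr n.factorial_ne_zero
  rw [coeff_egf, coeff_egf, Nat.cast_choose ℂ (Nat.lt_succ_iff.mp (mem_range.mp hk))]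
  field_simp

theorem rescale_egf (l : ℂ) (f : ℕ → ℂ) : rescale l (egf f) = egf fun n => l ^ n * f n := by
  ext n
  rw [coeff_rescale, coeff_egf, coeff_egf, mul_div_assoc]

theorem derivative_expS (a : ℂ) : d⁄dX ℂ (expS a) = C a * expS a := by
  ext n
  rw [coeff_derivative, coeff_C_mul, expS, coeff_egf, coeff_egf, Nat.factorial_succ]
  push_cast
  field_simp
  ring

theorem one_add_C_mul_X_mul_derivative_degExp (l a : ℂ) :
    (1 + C l * X) * d⁄dX ℂ (degExp l a) = C a * degExp l a := by
  ext n
  have hdff : dff l a (n + 1) = dff l a n * (a - n * l) := prod_range_succ _ _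
  rw [coeff_one_add_C_mul_X_mul_derivative, coeff_C_mul, degExp, coeff_egf, coeff_egf, hdff,
    Nat.factorial_succ]
  push_cast
  field_simp
  ring

/-- The series `log (1 + t) / t`. -/
noncomputable def logDivX : ℂ⟦X⟧ := mk fun n => (-1) ^ n / (n + 1)

theorem logS_eq_X_mul_logDivX : logS = X * logDivX := by
  ext n
  rcases n with _ | n
  · simp [logS]
  · rw [coeff_succ_X_mul, logS, logDivX, coeff_mk, coeff_mk, if_neg n.succ_ne_zero]
    push_cast
    ring

/-- The series `log (1 + λt) / λ`, equal to `t` at `λ = 0`. -/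
noncomputable def degLog (l : ℂ) : ℂ⟦X⟧ := X * rescale l logDivX

theorem constantCoeff_degLog (l : ℂ) : constantCoeff (degLog l) = 0 := by
  simp [degLog]

theorem coeff_degLog_pow (l : ℂ) (k m : ℕ) :
    coeff m (degLog l ^ k) = l ^ (m - k) * coeff m (logS ^ k) := by
  rw [degLog, logS_eq_X_mul_logDivX, mul_pow, mul_pow, ← map_pow, coeff_X_pow_mul',
    coeff_X_pow_mul', coeff_rescale]
  split_ifs <;> simp

theorem one_add_C_mul_X_mul_derivative_degLog (l : ℂ) :
    (1 + C l * X) * d⁄dX ℂ (degLog l) = 1 := by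
  have hd : d⁄dX ℂ (degLog l) = mk fun n => (-l) ^ n := by
    ext n
    rw [coeff_derivative, degLog, coeff_succ_X_mul, coeff_rescale, logDivX, coeff_mk, coeff_mk]
    field_simp
    ring
  ext n
  rcases n with _ | n
  · simp [hd]
  · rw [hd, add_mul, one_mul, mul_assoc, map_add, coeff_C_mul, coeff_succ_X_mul, coeff_mk,
      coeff_mk, coeff_one, if_neg n.succ_ne_zero]
    ring

theorem hasSubst_degLog (l : ℂ) : HasSubst (degLog l) :=
  HasSubst.of_constantCoeff_zero' (constantCoeff_degLog l)

theorem expS_subst_degLog (l a : ℂ) : (expS a).subst (degLog l) = degExp l a := by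
  refine eq_of_one_add_C_mul_X_mul_derivative_eq (l := l) (a := a) ?_
    (one_add_C_mul_X_mul_derivative_degExp l a) ?_
  · rw [derivative_subst (hasSubst_degLog l), derivative_expS, ← smul_eq_C_mul (expS a),
      subst_smul (hasSubst_degLog l), smul_eq_C_mul, mul_left_comm, mul_assoc,
      one_add_C_mul_X_mul_derivative_degLog, mul_one]
  · rw [← coeff_zero_eq_constantCoeff_apply, ← coeff_zero_eq_constantCoeff_apply,
      coeff_subst_eq_sum_range (constantCoeff_degLog l)]
    simp [expS, degExp, coeff_egf, dff]

theorem egf_subst_degLog {S1 : ℕ → ℕ → ℂ}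
    (hS1 : ∀ j, logS ^ j = C (j.factorial : ℂ) * egf fun k => S1 k j) (l : ℂ) (f : ℕ → ℂ) :
    (egf f).subst (degLog l) = egf fun m => ∑ k ∈ range (m + 1), l ^ (m - k) * S1 m k * f k := by
  ext m
  rw [coeff_subst_eq_sum_range (constantCoeff_degLog l), coeff_egf, sum_div]
  refine sum_congr rfl fun k _ => ?_
  rw [coeff_degLog_pow, hS1, coeff_C_mul, coeff_egf, coeff_egf]
  have hk : (k.factorial : ℂ) ≠ 0 := Nat.cast_ne_zero.mpr k.factorial_ne_zero
  field_simp

theorem egf_mul_degLog_eq_X {b : ℕ → ℂ} (hb : egf b * logS = X) (l : ℂ) :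
    (egf fun n => l ^ n * b n) * degLog l = X := by
  have hinv : egf b * logDivX = 1 := by
    refine mul_left_cancel₀ X_ne_zero ?_
    rw [logS_eq_X_mul_logDivX] at hb
    linear_combination hb
  rw [← rescale_egf, degLog, mul_left_comm, ← map_mul, hinv, map_one, mul_one]

noncomputable def cosSeq (y : ℂ) (j : ℕ) : ℂ := if Even j then (-1) ^ (j / 2) * y ^ j else 0

theorem C_half_mul_expS_add_expS_neg (y : ℂ) :
    C (1 / 2 : ℂ) * (expS (I * y) + expS (-(I * y))) = egf (cosSeq y) := by
  ext j
  rw [coeff_C_mul, map_add, expS, expS, coeff_egf, coeff_egf, coeff_egf, cosSeq]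
  obtain ⟨i, rfl | rfl⟩ := Nat.even_or_odd' j
  · rw [if_pos (even_two_mul i), (even_two_mul i).neg_pow, pow_mul, mul_pow, I_sq,
      Nat.mul_div_cancel_left i two_pos, pow_mul]
    ring
  · rw [if_neg (Nat.not_even_iff_odd.mpr (odd_two_mul_add_one i)),
      (odd_two_mul_add_one i).neg_pow]
    ring

theorem degCos_eq_subst (l y : ℂ) : degCos l y = (egf (cosSeq y)).subst (degLog l) := by
  rw [← C_half_mul_expS_add_expS_neg, ← smul_eq_C_mul, subst_smul (hasSubst_degLog l),
    subst_add (hasSubst_degLog l), expS_subst_degLog, expS_subst_degLog, smul_eq_C_mul, degCos]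

theorem sum_range_succ_eq_sum_range_div_two_succ {M : Type*} [AddCommMonoid M] {f : ℕ → M}
    (hf : ∀ j, Odd j → f j = 0) (k : ℕ) :
    ∑ j ∈ range (k + 1), f j = ∑ i ∈ range (k / 2 + 1), f (2 * i) := by
  rw [← sum_image (g := (2 * ·)) fun i _ j _ h => by simpa using h]
  refine (sum_subset (fun j hj => ?_) fun j hj hj' => hf j ?_).symm
  · obtain ⟨i, hi, rfl⟩ := mem_image.mp hj
    simp only [mem_range] at hi ⊢
    omega
  · obtain ⟨i, rfl⟩ | hodd := Nat.even_or_odd j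
    · refine absurd (mem_image.mpr ⟨i, ?_, two_mul i⟩) hj'
      simp only [mem_range] at hj ⊢
      omega
    · exact hodd

theorem egf_cosSeq_mul_egf (y : ℂ) (B : ℕ → ℂ) :
    egf (cosSeq y) * egf B = egf fun k => ∑ i ∈ range (k / 2 + 1),
      (k.choose (2 * i) : ℂ) * (-1) ^ i * y ^ (2 * i) * B (k - 2 * i) := by
  rw [egf_mul]
  congr 1
  funext k
  rw [sum_range_succ_eq_sum_range_div_two_succ fun j hj => by
    simp [cosSeq, Nat.not_even_iff_odd.mpr hj]]
  refine sum_congr rfl fun i _ => ?_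
  simp [cosSeq, mul_assoc]

theorem stmt18 (lam x y : ℝ) (Bc B b : ℕ → ℂ) (S1 : ℕ → ℕ → ℂ)
    (hBc : egf Bc * (degExp lam (1/2) - degExp lam (-(1/2))) =
      PowerSeries.X * degExp lam x * degCos lam y)
    (hB : egf B * (expS (1/2) - expS (-(1/2))) = PowerSeries.X * expS x)
    (hb : egf b * logS = PowerSeries.X)
    (hS1 : ∀ j, logS ^ j = PowerSeries.C (R := ℂ) (Nat.factorial j) * egf (fun k => S1 k j))
    (n : ℕ) :
    Bc n = ∑ m ∈ Finset.range (n+1), ∑ k ∈ Finset.range (m+1), ∑ l ∈ Finset.range (k/2+1),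
      (n.choose m : ℂ) * (k.choose (2*l) : ℂ) * (-1)^l * (lam:ℂ)^(n-k) * S1 m k *
        b (n-m) * B (k-2*l) * (y:ℂ)^(2*l) := by
  set l : ℂ := (lam : ℂ)
  have hL := hasSubst_degLog l
  have hB' : (egf B).subst (degLog l) * (degExp l (1/2) - degExp l (-(1/2))) =
      degLog l * degExp l x := by
    simpa only [subst_mul hL, subst_sub hL, subst_X hL, expS_subst_degLog] using
      congrArg (subst (degLog l)) hB
  have hD : degExp l (1/2) - degExp l (-(1/2)) ≠ 0 := fun h => by
    simpa [degExp, coeff_egf, dff] using congrArg (coeff 1) h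
  have hgf : egf Bc = ((egf (cosSeq y) * egf B).subst (degLog l)) * egf fun n => l ^ n * b n := by
    refine mul_right_cancel₀ hD ?_
    rw [hBc, degCos_eq_subst, subst_mul hL, ← egf_mul_degLog_eq_X hb l]
    linear_combination -(egf (fun n => l ^ n * b n) * (egf (cosSeq y)).subst (degLog l)) * hB'
  rw [egf_cosSeq_mul_egf, egf_subst_degLog hS1, egf_mul] at hgf
  rw [congrFun (egf_injective hgf) n]
  refine sum_congr rfl fun m hm => ?_
  rw [mul_sum, sum_mul]
  refine sum_congr rfl fun k hk => ?_
  rw [mul_sum, mul_sum, sum_mul]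
  refine sum_congr rfl fun i _ => ?_
  have hl : l ^ (n - k) = l ^ (m - k) * l ^ (n - m) := by
    rw [← pow_add]
    congr 1
    simp only [mem_range] at hm hk
    omega
  rw [hl]
  ring
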